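/- arXiv:0902.0649 — 7 statements merged into one kernel-verified Lean document; each statement's English description precedes it below -/
import Mathlib

section
/- Let F : ℝ³ → ℝ⁴ be given by F(u,v,w) = (w, u, v, -u² - 3v²/2 + u w² + v w³ - w⁴/4 + w⁵/5 - w⁶/6). Then the 3×3 Hessian matrix (h_{ij}) of F with respect to the normal ν = (-2uw - 3vw² + w³ - w⁴ + w⁵, 2u - w², 3v - w³, 1), i.e., h_{ij} = ν · ∂²F/∂x^i∂x^j with (x¹,x²,x³) = (u,v,w), has determinant h(u,v,w) = 6(2u + 6vw - w² + 4w³ - 2w⁴). -/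
/-!
`F` is the graph `(u, v, w) ↦ (w, u, v, φ(u, v, w))` of the polynomial `φ` in its fourth
coordinate, and `ν = (-φ_w, -φ_u, -φ_v, 1)` is its upward normal. The first three components of
`F` are linear, so their second partial derivatives vanish and `ν · F_{xⁱxʲ} = φ_{xⁱxʲ}`: the
matrix `h` is the Hessian of `φ`, whose determinant is a direct computation.
-/

open Matrix
/-- The standard basis vectors of ℝ³ (as ℝ×ℝ×ℝ). -/
def e3 : Fin 3 → ℝ × ℝ × ℝ := ![(1,0,0), (0,1,0), (0,0,1)]

/-- Partial derivative of a map on ℝ³ in the i-th coordinate direction. -/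
noncomputable def pd3 {X : Type*} [NormedAddCommGroup X] [NormedSpace ℝ X]
    (i : Fin 3) (f : ℝ × ℝ × ℝ → X) (p : ℝ × ℝ × ℝ) : X :=
  fderiv ℝ f p (e3 i)

section Components

variable {ι : Type*} [Fintype ι] {E : ι → Type*} [∀ k, NormedAddCommGroup (E k)]
  [∀ k, NormedSpace ℝ (E k)]

theorem pd3_apply {f : ℝ × ℝ × ℝ → ∀ k, E k} {p : ℝ × ℝ × ℝ} (hf : DifferentiableAt ℝ f p)
    (i : Fin 3) (k : ι) : pd3 i f p k = pd3 i (fun q => f q k) p := by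
  rw [pd3, pd3, (hasFDerivAt_pi'.1 hf.hasFDerivAt k).fderiv]
  rfl

theorem pd3_pd3_apply {f : ℝ × ℝ × ℝ → ∀ k, E k} (hf : ContDiff ℝ 2 f) (i j : Fin 3)
    (p : ℝ × ℝ × ℝ) (k : ι) : pd3 i (pd3 j f) p k = pd3 i (pd3 j fun q => f q k) p := by
  have hdf : Differentiable ℝ (fun q => fderiv ℝ f q) :=
    (hf.fderiv_right (m := 1) (by norm_num)).differentiable one_ne_zero
  have hpd : Differentiable ℝ (pd3 j f) := fun q =>
    (hdf q).clm_apply (differentiableAt_const (e3 j))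
  rw [pd3_apply (hpd p)]
  congr 1
  funext q
  exact pd3_apply (hf.differentiable two_ne_zero q) j k

end Components

noncomputable def graphHeight : ℝ × ℝ × ℝ → ℝ := fun p =>
  -p.1^2 - 3*p.2.1^2/2 + p.1*p.2.2^2 + p.2.1*p.2.2^3 - p.2.2^4/4 + p.2.2^5/5 - p.2.2^6/6

noncomputable def graphMap : ℝ × ℝ × ℝ → Fin 4 → ℝ := fun p =>
  ![p.2.2, p.1, p.2.1, graphHeight p]

theorem pd3_graphHeight (j : Fin 3) : pd3 j graphHeight = fun q =>
    ![-2*q.1 + q.2.2^2, -3*q.2.1 + q.2.2^3,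
      2*q.1*q.2.2 + 3*q.2.1*q.2.2^2 - q.2.2^3 + q.2.2^4 - q.2.2^5] j := by
  unfold pd3 graphHeight
  fin_cases j <;>
    simp (disch := fun_prop) [e3, div_eq_mul_inv, fderiv_fun_add, fderiv_fun_sub,
      fderiv_fun_mul, fderiv_fun_pow, fderiv_fun_neg, fderiv.fst, fderiv.snd] <;>
    funext q <;> ring

theorem hessian_graphHeight (p : ℝ × ℝ × ℝ) :
    Matrix.of (fun i j : Fin 3 => pd3 i (pd3 j graphHeight) p) =
      !![-2, 0, 2*p.2.2;
        0, -3, 3*p.2.2^2;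
        2*p.2.2, 3*p.2.2^2, 2*p.1 + 6*p.2.1*p.2.2 - 3*p.2.2^2 + 4*p.2.2^3 - 5*p.2.2^4] := by
  ext i j
  rw [of_apply, pd3_graphHeight]
  unfold pd3
  fin_cases i <;> fin_cases j <;>
    simp (disch := fun_prop) [e3, fderiv_fun_add, fderiv_fun_sub, fderiv_fun_mul,
      fderiv_fun_pow, fderiv_fun_neg, fderiv.fst, fderiv.snd] <;>
    ring

theorem contDiff_graphMap : ContDiff ℝ 2 graphMap := by
  rw [contDiff_pi]
  intro k
  fin_cases k <;> simp [graphMap, graphHeight] <;> fun_prop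

theorem pd3_pd3_graphMap (i j : Fin 3) (p : ℝ × ℝ × ℝ) :
    pd3 i (pd3 j graphMap) p = Pi.single 3 (pd3 i (pd3 j graphHeight) p) := by
  funext k
  rw [pd3_pd3_apply contDiff_graphMap]
  unfold pd3
  fin_cases k <;> simp (disch := fun_prop) [graphMap, Pi.single_apply, fderiv.fst, fderiv.snd]

/-- For F(u,v,w) = (w,u,v, -u² - 3v²/2 + uw² + vw³ - w⁴/4 + w⁵/5 - w⁶/6) and the normal
    ν = (-2uw - 3vw² + w³ - w⁴ + w⁵, 2u - w², 3v - w³, 1), the Hessian matrix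
    h_{ij} = ν·F_{xⁱxʲ} has determinant 6(2u + 6vw - w² + 4w³ - 2w⁴). -/
theorem stmt4
    (F : ℝ × ℝ × ℝ → Fin 4 → ℝ)
    (hF : F = fun p =>
      ![p.2.2, p.1, p.2.1,
        -p.1^2 - 3*p.2.1^2/2 + p.1*p.2.2^2 + p.2.1*p.2.2^3
          - p.2.2^4/4 + p.2.2^5/5 - p.2.2^6/6])
    (ν : ℝ × ℝ × ℝ → Fin 4 → ℝ)
    (hν : ν = fun p =>
      ![-2*p.1*p.2.2 - 3*p.2.1*p.2.2^2 + p.2.2^3 - p.2.2^4 + p.2.2^5,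
        2*p.1 - p.2.2^2, 3*p.2.1 - p.2.2^3, 1])
    (p : ℝ × ℝ × ℝ) :
    Matrix.det (Matrix.of fun i j : Fin 3 => ν p ⬝ᵥ pd3 i (pd3 j F) p)
      = 6 * (2*p.1 + 6*p.2.1*p.2.2 - p.2.2^2 + 4*p.2.2^3 - 2*p.2.2^4) := by
  have hF' : F = graphMap := hF
  have hν₃ : ν p 3 = 1 := by simp [hν]
  have hh : (Matrix.of fun i j : Fin 3 => ν p ⬝ᵥ pd3 i (pd3 j F) p) =
      Matrix.of fun i j : Fin 3 => pd3 i (pd3 j graphHeight) p := by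
    ext i j
    rw [of_apply, of_apply, hF', pd3_pd3_graphMap, dotProduct_single, hν₃, one_mul]
  rw [hh, hessian_graphHeight, det_fin_three]
  simp only [of_apply, cons_val', cons_val_zero, cons_val_one, cons_val_two, head_cons,
    tail_cons, empty_val', cons_val_fin_one, head_fin_const]
  ring
end

section
/- Let F : ℝ³ → ℝ⁴ be F(u,v,w) = (w, u, v, -u² - 3v²/2 + u w² + v w³ - w⁴/4 + w⁵/5 - w⁶/6), h(u,v,w) = 6(2u + 6vw - w² + 4w³ - 2w⁴), and ξ the vector field ξ = (w, w², 1) on ℝ³. Define h' = dh(ξ), h'' = dh'(ξ), h''' = dh''(ξ) (directional derivatives along ξ). Then h(0)=h'(0)=h''(0)=0, h'''(0) = 144 ≠ 0, and the Jacobian matrix of the map (h, h', h'') : ℝ³ → ℝ³ at the origin is invertible. -/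
/-- Directional derivative of φ along the vector field ξ. -/
noncomputable def dirDeriv (ξ : ℝ × ℝ × ℝ → ℝ × ℝ × ℝ) (φ : ℝ × ℝ × ℝ → ℝ)
    (p : ℝ × ℝ × ℝ) : ℝ :=
  fderiv ℝ φ p (ξ p)

/-!
A function `A(w) u + B(w) v + g(w)` with polynomial coefficients is sent by `φ ↦ dφ(ξ)`, for a
field `ξ = (α(w), β(w), 1)`, to `A'(w) u + B'(w) v + (A α + B β + g')(w)`, a function of the same
shape. For `ξ = (w, w², 1)` this gives `h' = 36 v + 72 w² - 12 w³`, `h'' = 144 w` and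
`h''' = 144`, and the Jacobian of `(h, h', h'')` at the origin is `diag(12, 36, 144)`.
-/

open Polynomial ContinuousLinearMap

noncomputable def affineInUV (A B g : ℝ[X]) (p : ℝ × ℝ × ℝ) : ℝ :=
  A.eval p.2.2 * p.1 + B.eval p.2.2 * p.2.1 + g.eval p.2.2

theorem hasFDerivAt_affineInUV (A B g : ℝ[X]) (p : ℝ × ℝ × ℝ) :
    HasFDerivAt (affineInUV A B g)
      (A.eval p.2.2 • fst ℝ ℝ (ℝ × ℝ) + B.eval p.2.2 • (fst ℝ ℝ ℝ).comp (snd ℝ ℝ (ℝ × ℝ)) +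
        affineInUV (derivative A) (derivative B) (derivative g) p •
          (snd ℝ ℝ ℝ).comp (snd ℝ ℝ (ℝ × ℝ))) p := by
  have hu : HasFDerivAt (fun q : ℝ × ℝ × ℝ => q.1) (fst ℝ ℝ (ℝ × ℝ)) p := hasFDerivAt_fst
  have hv : HasFDerivAt (fun q : ℝ × ℝ × ℝ => q.2.1) ((fst ℝ ℝ ℝ).comp (snd ℝ ℝ (ℝ × ℝ))) p :=
    hasFDerivAt_fst.comp p hasFDerivAt_snd
  have hw : HasFDerivAt (fun q : ℝ × ℝ × ℝ => q.2.2) ((snd ℝ ℝ ℝ).comp (snd ℝ ℝ (ℝ × ℝ))) p :=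
    hasFDerivAt_snd.comp p hasFDerivAt_snd
  have hcoeff (P : ℝ[X]) := (P.hasDerivAt p.2.2).comp_hasFDerivAt p hw
  refine ((((hcoeff A).mul hu).add ((hcoeff B).mul hv)).add (hcoeff g)).congr_fderiv
    (ContinuousLinearMap.ext fun x => ?_)
  simp only [Function.comp_apply, add_apply, smul_apply, coe_fst', smul_eq_mul, comp_apply, coe_snd',
    affineInUV]
  ring

theorem dirDeriv_affineInUV (α β A B g : ℝ[X]) :
    dirDeriv (fun p => (α.eval p.2.2, β.eval p.2.2, 1)) (affineInUV A B g) =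
      affineInUV (derivative A) (derivative B) (A * α + B * β + derivative g) := by
  funext p
  rw [dirDeriv, (hasFDerivAt_affineInUV A B g p).fderiv]
  simp only [affineInUV, add_apply, smul_apply, coe_fst', smul_eq_mul, comp_apply, coe_snd', mul_one,
    eval_add, eval_mul]
  ring

/-- For h = 6(2u + 6vw - w² + 4w³ - 2w⁴) and ξ = (w, w², 1):
    h(0) = h'(0) = h''(0) = 0, h'''(0) = 144, and the Jacobian of (h, h', h'')
    at the origin is invertible — the origin is an A₄-inflection point. -/
theorem stmt5
    (h : ℝ × ℝ × ℝ → ℝ)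
    (hh : h = fun p => 6 * (2*p.1 + 6*p.2.1*p.2.2 - p.2.2^2 + 4*p.2.2^3 - 2*p.2.2^4))
    (ξ : ℝ × ℝ × ℝ → ℝ × ℝ × ℝ)
    (hξ : ξ = fun p => (p.2.2, p.2.2^2, 1))
    (h' h'' h''' : ℝ × ℝ × ℝ → ℝ)
    (hh' : h' = dirDeriv ξ h) (hh'' : h'' = dirDeriv ξ h') (hh''' : h''' = dirDeriv ξ h'') :
    h 0 = 0 ∧ h' 0 = 0 ∧ h'' 0 = 0 ∧ h''' 0 = 144 ∧
    Function.Bijective (fderiv ℝ (fun p => (h p, h' p, h'' p)) 0) := by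
  have hξ' : ξ = fun p => ((X : ℝ[X]).eval p.2.2, (X ^ 2 : ℝ[X]).eval p.2.2, 1) := by simp [hξ]
  have eh : h = affineInUV 12 (36 * X) (6 * (-X ^ 2 + 4 * X ^ 3 - 2 * X ^ 4)) := by
    rw [hh]
    funext p
    simp only [affineInUV, eval_ofNat, eval_mul, eval_X, eval_sub, eval_add, eval_neg, eval_pow]
    ring
  have eh' : h' = affineInUV 0 36 (72 * X ^ 2 - 12 * X ^ 3) := by
    rw [hh', hξ', eh, dirDeriv_affineInUV]
    congr 1 <;> simp [C_ofNat]
    ring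
  have eh'' : h'' = affineInUV 0 0 (144 * X) := by
    rw [hh'', hξ', eh', dirDeriv_affineInUV]
    congr 1 <;> simp [C_ofNat]
    ring
  have eh''' : h''' = affineInUV 0 0 144 := by
    rw [hh''', hξ', eh'', dirDeriv_affineInUV]
    congr 1
    simp
  refine ⟨by simp [eh, affineInUV], by simp [eh', affineInUV], by simp [eh'', affineInUV],
    by simp [eh''', affineInUV], ?_⟩
  rw [eh, eh', eh'', ((hasFDerivAt_affineInUV _ _ _ 0).prodMk
    ((hasFDerivAt_affineInUV _ _ _ 0).prodMk (hasFDerivAt_affineInUV _ _ _ 0))).fderiv]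
  convert (mulLeft_bijective₀ (12 : ℝ) (by norm_num)).prodMap
    ((mulLeft_bijective₀ (36 : ℝ) (by norm_num)).prodMap
      (mulLeft_bijective₀ (144 : ℝ) (by norm_num))) using 1
  ext x <;> simp [affineInUV]
end

section
/- Let U ⊆ ℝⁿ be open, F : U → ℝ^{n+1} an immersion with normal map ν_p(v) = det(F_{x¹}(p),…,F_{xⁿ}(p),v), h = det(ν·F_{x^ix^j})_{i,j}, and μ = det(ν_{x¹},…,ν_{xⁿ},ν) (identifying (ℝ^{n+1})* ≅ ℝ^{n+1}). Assume ν(p)·ν(p)^T ≠ 0. Then h(p) = 0 if and only if μ(p) = 0; i.e., the inflection points of F coincide with the singular points of its affine Gauss map. -/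
open Matrix

/-- Partial derivative in the j-th coordinate direction. -/
noncomputable def pd {n : ℕ} {X : Type*} [NormedAddCommGroup X] [NormedSpace ℝ X]
    (j : Fin n) (f : (Fin n → ℝ) → X) (p : Fin n → ℝ) : X :=
  fderiv ℝ f p (Pi.single j 1)

lemma snoc_update {n : ℕ} (w : Fin n → Fin (n+1) → ℝ) (v : Fin (n+1) → ℝ) :
    (Fin.snoc w v : Fin (n+1) → Fin (n+1) → ℝ) = Function.update (Fin.snoc w 0) (Fin.last n) v := by
  funext k
  refine Fin.lastCases ?_ (fun j => ?_) k
  · simp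
  · rw [Function.update_of_ne (Fin.castSucc_lt_last j).ne]
    simp

lemma det_flip {n : ℕ} (w : Fin n → Fin (n+1) → ℝ) (v : Fin (n+1) → ℝ) :
    Matrix.det (Matrix.of fun i k : Fin (n+1) =>
      (Fin.snoc w v : Fin (n+1) → Fin (n+1) → ℝ) k i)
    = Matrix.det (Matrix.of (Fin.snoc w v) : Matrix (Fin (n+1)) (Fin (n+1)) ℝ) := by
  rw [← Matrix.det_transpose (Matrix.of (Fin.snoc w v))]
  rfl

lemma detc_dot {n : ℕ} (w : Fin n → Fin (n+1) → ℝ) (v : Fin (n+1) → ℝ) :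
    (fun l => Matrix.det (Matrix.of fun i k : Fin (n+1) =>
      (Fin.snoc w (Pi.single l 1) : Fin (n+1) → Fin (n+1) → ℝ) k i)) ⬝ᵥ v
    = Matrix.det (Matrix.of fun i k : Fin (n+1) =>
      (Fin.snoc w v : Fin (n+1) → Fin (n+1) → ℝ) k i) := by
  have hL : ∀ v : Fin (n+1) → ℝ,
      Matrix.det (Matrix.of (Fin.snoc w v) : Matrix (Fin (n+1)) (Fin (n+1)) ℝ)
      = ((Matrix.detRowAlternating :
          (Fin (n+1) → ℝ) [⋀^Fin (n+1)]→ₗ[ℝ] ℝ).toMultilinearMap.toLinearMap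
            (Fin.snoc w 0) (Fin.last n)) v := by
    intro v
    show Matrix.detRowAlternating (Matrix.of (Fin.snoc w v)) = _
    rw [snoc_update w v]
    rfl
  have hv : v = ∑ l, v l • (Pi.single l 1 : Fin (n+1) → ℝ) := by
    funext k
    simp [Finset.sum_apply, Pi.single_apply]
  rw [det_flip, hL]
  conv_rhs => rw [hv]
  rw [map_sum]
  simp only [_root_.map_smul, smul_eq_mul]
  simp only [← hL, ← det_flip]
  simp [dotProduct, mul_comm]

lemma detc_repeat {n : ℕ} (w : Fin n → Fin (n+1) → ℝ) (j : Fin n) :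
    Matrix.det (Matrix.of fun i k : Fin (n+1) =>
      (Fin.snoc w (w j) : Fin (n+1) → Fin (n+1) → ℝ) k i) = 0 := by
  rw [det_flip]
  refine Matrix.det_zero_of_row_eq (i := Fin.castSucc j) (j := Fin.last n)
    (Fin.castSucc_lt_last j).ne ?_
  funext k
  simp

lemma diffAt_prod {E : Type*} [NormedAddCommGroup E] [NormedSpace ℝ E] {ι : Type*}
    {s : Finset ι} {f : ι → E → ℝ} {x : E} (h : ∀ i ∈ s, DifferentiableAt ℝ (f i) x) :
    DifferentiableAt ℝ (fun q => ∏ i ∈ s, f i q) x := by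
  classical
  induction s using Finset.induction_on with
  | empty => simpa using differentiableAt_const (1:ℝ)
  | insert a s' ha ih =>
    simp only [Finset.prod_insert ha]
    exact (h a (Finset.mem_insert_self a s')).mul
      (ih fun i hi => h i (Finset.mem_insert_of_mem hi))

lemma diffAt_det {n m : ℕ} {A : (Fin n → ℝ) → Matrix (Fin m) (Fin m) ℝ} {p : Fin n → ℝ}
    (hA : ∀ i j, DifferentiableAt ℝ (fun q => A q i j) p) :
    DifferentiableAt ℝ (fun q => (A q).det) p := by
  simp only [Matrix.det_apply']
  apply DifferentiableAt.fun_sum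
  intro σ _
  have : DifferentiableAt ℝ (fun q => ∏ i, A q (σ i) i) p :=
    diffAt_prod fun i _ => hA (σ i) i
  exact this.const_mul _

/-- For an immersion F with det-normal map ν, Hessian determinant h, and
    μ = det(ν_{x¹},…,ν_{xⁿ},ν): if ν(p)·ν(p)ᵀ ≠ 0 then h(p) = 0 iff μ(p) = 0, i.e.
    inflection points of F coincide with singular points of its affine Gauss map. -/
theorem stmt10 (n : ℕ) (U : Set (Fin n → ℝ)) (hU : IsOpen U)
    (F : (Fin n → ℝ) → Fin (n+1) → ℝ)
    (hF : ContDiffOn ℝ (⊤ : ℕ∞) F U)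
    (himm : ∀ p ∈ U, Function.Injective (fderiv ℝ F p))
    (ν : (Fin n → ℝ) → Fin (n+1) → ℝ)
    (hν : ν = fun p => fun l : Fin (n+1) => Matrix.det
      (Matrix.of fun i k : Fin (n+1) =>
        (Fin.snoc (fun j : Fin n => pd j F p) (Pi.single l 1) : Fin (n+1) → Fin (n+1) → ℝ) k i))
    (h μ : (Fin n → ℝ) → ℝ)
    (hh : h = fun p => Matrix.det (Matrix.of fun i j : Fin n => ν p ⬝ᵥ pd i (pd j F) p))
    (hμ : μ = fun p => Matrix.det (Matrix.of fun i k : Fin (n+1) =>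
      (Fin.snoc (fun i' : Fin n => pd i' ν p) (ν p) : Fin (n+1) → Fin (n+1) → ℝ) i k)) :
    ∀ p ∈ U, ν p ⬝ᵥ ν p ≠ 0 → (h p = 0 ↔ μ p = 0) := by
  intro p hp hνν
  classical
  have hdot : ∀ (q : Fin n → ℝ) (v : Fin (n+1) → ℝ),
      ν q ⬝ᵥ v = Matrix.det (Matrix.of fun i k : Fin (n+1) =>
        (Fin.snoc (fun j : Fin n => pd j F q) v : Fin (n+1) → Fin (n+1) → ℝ) k i) := by
    intro q v
    rw [hν]
    exact detc_dot _ v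
  have horth : ∀ (q : Fin n → ℝ) (j : Fin n), ν q ⬝ᵥ pd j F q = 0 := by
    intro q j
    rw [hdot]
    exact detc_repeat _ j
  have hFat : ContDiffAt ℝ (⊤ : ℕ∞) F p := hF.contDiffAt (hU.mem_nhds hp)
  have hfd : ContDiffAt ℝ (⊤ : ℕ∞) (fderiv ℝ F) p := hFat.fderiv_right (by simp)
  have hpdF : ∀ j, ContDiffAt ℝ (⊤ : ℕ∞) (pd j F) p := by
    intro j
    have hg : ContDiff ℝ (⊤ : ℕ∞) (fun L : (Fin n → ℝ) →L[ℝ] (Fin (n+1) → ℝ) => L (Pi.single j 1)) :=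
      contDiff_id.clm_apply contDiff_const
    exact hg.comp_contDiffAt p hfd
  have dpdF : ∀ j, DifferentiableAt ℝ (pd j F) p := fun j => (hpdF j).differentiableAt (by simp)
  have dpdFl : ∀ j l, DifferentiableAt ℝ (fun q => pd j F q l) p := fun j l =>
    (contDiffAt_pi.mp (hpdF j) l).differentiableAt (by simp)
  have dνl : ∀ l, DifferentiableAt ℝ (fun q => ν q l) p := by
    intro l
    rw [hν]
    apply diffAt_det
    intro i k
    refine Fin.lastCases ?_ (fun j => ?_) k
    · simp only [Matrix.of_apply, Fin.snoc_last]
      exact differentiableAt_const _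
    · simp only [Matrix.of_apply, Fin.snoc_castSucc]
      exact dpdFl j i
  have dν : DifferentiableAt ℝ ν p := differentiableAt_pi.mpr dνl
  have hcomp : ∀ (g : (Fin n → ℝ) → (Fin (n+1) → ℝ)), DifferentiableAt ℝ g p →
      ∀ (l : Fin (n+1)) (i : Fin n),
        fderiv ℝ (fun q => g q l) p (Pi.single i 1) = pd i g p l := by
    intro g hg l i
    have hgl : (fun q => g q l)
        = (ContinuousLinearMap.proj l : ((Fin (n+1)) → ℝ) →L[ℝ] ℝ) ∘ g := rfl
    rw [hgl, fderiv_comp p (ContinuousLinearMap.differentiableAt _) hg]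
    simp [pd, ContinuousLinearMap.fderiv]
  have key : ∀ i j : Fin n, pd i ν p ⬝ᵥ pd j F p = -(ν p ⬝ᵥ pd i (pd j F) p) := by
    intro i j
    have hz : (fun q => ν q ⬝ᵥ pd j F q) = fun _ => (0:ℝ) := funext fun q => horth q j
    have h0 : fderiv ℝ (fun q => ν q ⬝ᵥ pd j F q) p (Pi.single i 1) = 0 := by
      rw [hz]; simp
    have hsum : fderiv ℝ (fun q => ν q ⬝ᵥ pd j F q) p (Pi.single i 1)
        = ∑ l, (pd i ν p l * pd j F p l + ν p l * pd i (pd j F) p l) := by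
      rw [show (fun q => ν q ⬝ᵥ pd j F q) = (fun q => ∑ l, ν q l * pd j F q l) from rfl,
        fderiv_fun_sum (u := Finset.univ) (A := fun l q => ν q l * pd j F q l)
          (fun l _ => (dνl l).mul (dpdFl j l))]
      rw [ContinuousLinearMap.sum_apply]
      refine Finset.sum_congr rfl fun l _ => ?_
      rw [fderiv_fun_mul (dνl l) (dpdFl j l)]
      simp only [ContinuousLinearMap.add_apply, ContinuousLinearMap.smul_apply, smul_eq_mul]
      rw [hcomp ν dν l i, hcomp (pd j F) (dpdF j) l i]
      ring
    rw [h0] at hsum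
    have hsplit : pd i ν p ⬝ᵥ pd j F p + ν p ⬝ᵥ pd i (pd j F) p = 0 := by
      simpa [dotProduct, Finset.sum_add_distrib] using hsum.symm
    linarith
  -- the matrices
  have hμp : μ p = Matrix.det (Matrix.of fun i k : Fin (n+1) =>
      (Fin.snoc (fun i' : Fin n => pd i' ν p) (ν p) : Fin (n+1) → Fin (n+1) → ℝ) i k) := by
    rw [hμ]
  have hdetB : Matrix.det (Matrix.of fun i k : Fin (n+1) =>
      (Fin.snoc (fun j : Fin n => pd j F p) (ν p) : Fin (n+1) → Fin (n+1) → ℝ) k i)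
      = ν p ⬝ᵥ ν p := (hdot p (ν p)).symm
  set A : Matrix (Fin (n+1)) (Fin (n+1)) ℝ := Matrix.of fun i k : Fin (n+1) =>
    (Fin.snoc (fun i' : Fin n => pd i' ν p) (ν p) : Fin (n+1) → Fin (n+1) → ℝ) i k with hAdef
  set B : Matrix (Fin (n+1)) (Fin (n+1)) ℝ := Matrix.of fun i k : Fin (n+1) =>
    (Fin.snoc (fun j : Fin n => pd j F p) (ν p) : Fin (n+1) → Fin (n+1) → ℝ) k i with hBdef
  have hABentry : ∀ i j : Fin (n+1), (A * B) i j =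
      (Fin.snoc (fun i' : Fin n => pd i' ν p) (ν p) : Fin (n+1) → Fin (n+1) → ℝ) i ⬝ᵥ
      (Fin.snoc (fun j' : Fin n => pd j' F p) (ν p) : Fin (n+1) → Fin (n+1) → ℝ) j := by
    intro i j
    rw [Matrix.mul_apply]
    rfl
  have hdetAB : (A * B).det = (ν p ⬝ᵥ ν p) * ((-1:ℝ)^n * h p) := by
    rw [Matrix.det_succ_row (A*B) (Fin.last n), Fin.sum_univ_castSucc]
    have hzero : ∀ j' : Fin n, (A * B) (Fin.last n) (Fin.castSucc j') = 0 := by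
      intro j'
      rw [hABentry]
      simp only [Fin.snoc_last, Fin.snoc_castSucc]
      exact horth p j'
    rw [Finset.sum_eq_zero (fun j' _ => by rw [hzero]; ring)]
    have hlast : (A * B) (Fin.last n) (Fin.last n) = ν p ⬝ᵥ ν p := by
      rw [hABentry]; simp
    have hsub : ((A*B).submatrix (Fin.last n).succAbove (Fin.last n).succAbove)
        = -(Matrix.of fun i j : Fin n => ν p ⬝ᵥ pd i (pd j F) p) := by
      ext i' j'
      simp only [Matrix.submatrix_apply, Fin.succAbove_last, hABentry, Fin.snoc_castSucc,
        Matrix.neg_apply, Matrix.of_apply]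
      exact key i' j'
    have hhp : Matrix.det (Matrix.of fun i j : Fin n => ν p ⬝ᵥ pd i (pd j F) p) = h p := by
      rw [hh]
    rw [hlast, hsub, Matrix.det_neg, hhp]
    have h1 : ((-1:ℝ))^(n+n) = 1 := by
      rw [← two_mul, pow_mul]; norm_num
    simp only [Fin.val_last, Fintype.card_fin, h1]
    ring
  have hμh : μ p = (-1:ℝ)^n * h p := by
    have h1 : μ p * (ν p ⬝ᵥ ν p) = ((-1:ℝ)^n * h p) * (ν p ⬝ᵥ ν p) := by
      rw [hμp, ← hdetB, ← Matrix.det_mul, hdetAB, hdetB]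
      ring
    exact mul_right_cancel₀ hνν h1
  constructor
  · intro h0
    rw [hμh, h0, mul_zero]
  · intro h0
    rw [hμh] at h0
    rcases mul_eq_zero.mp h0 with h1 | h1
    · exact absurd h1 (pow_ne_zero n (by norm_num))
    · exact h1
end

section
/- Let S ⊆ Mⁿ = ℝⁿ be an embedded hypersurface through p, φ, ψ : U → ℝ two admissible functions near p (both have U∩S as zero set and nonvanishing differential on U∩S), and η̃ a smooth vector field on U. Then on U∩S, dψ(η̃) = dφ(η̃) · (∂ψ/∂x^n) for any coordinate system (x¹,…,xⁿ) with x^n = φ; in particular the zero sets of dφ(η̃) and dψ(η̃) within U∩S coincide near p. -/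
open Filter Topology

/-- Key lemma: at a common zero point with nonvanishing differential, the differential of
ψ vanishes on the kernel of the differential of φ. -/
lemma ker_le_ker_aux {E : Type*} [NormedAddCommGroup E] [NormedSpace ℝ E] [CompleteSpace E]
    {S U : Set E} (hU : IsOpen U)
    {φ ψ : E → ℝ} (hφ : ContDiffOn ℝ (⊤ : ℕ∞) φ U) (hψ : ContDiffOn ℝ (⊤ : ℕ∞) ψ U)
    (hφ0 : ∀ q ∈ U, (q ∈ S ↔ φ q = 0))
    (hψ0 : ∀ q ∈ U, (q ∈ S ↔ ψ q = 0))
    {q : E} (hq : q ∈ U ∩ S) (hdφq : fderiv ℝ φ q ≠ 0) :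
    ∀ v : E, fderiv ℝ φ q v = 0 → fderiv ℝ ψ q v = 0 := by
  have hqU : q ∈ U := hq.1
  have hnhd : U ∈ 𝓝 q := hU.mem_nhds hqU
  have hφat : ContDiffAt ℝ (⊤ : ℕ∞) φ q := (hφ q hqU).contDiffAt (hU.mem_nhds hqU)
  have hψat : ContDiffAt ℝ (⊤ : ℕ∞) ψ q := (hψ q hqU).contDiffAt (hU.mem_nhds hqU)
  have hsφ : HasStrictFDerivAt φ (fderiv ℝ φ q) q := hφat.hasStrictFDerivAt (by simp)
  have hsψ : HasStrictFDerivAt ψ (fderiv ℝ ψ q) q := hψat.hasStrictFDerivAt (by simp)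
  -- surjectivity of the derivative of φ
  obtain ⟨w, hw⟩ : ∃ w, fderiv ℝ φ q w ≠ 0 := by
    by_contra h; push_neg at h
    exact hdφq (ContinuousLinearMap.ext fun x => h x)
  have hsurj : (fderiv ℝ φ q).range = ⊤ := by
    rw [LinearMap.range_eq_top]
    intro x
    exact ⟨(x / fderiv ℝ φ q w) • w, by simp [div_mul_cancel₀, hw]⟩
  set f' := fderiv ℝ φ q
  set g : f'.ker → E := hsφ.implicitFunction φ f' hsurj (φ q) with hg
  have hg0 : g 0 = q := hsφ.implicitFunction_apply_image hsurj
  have hg' : HasStrictFDerivAt g f'.ker.subtypeL 0 :=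
    hsφ.to_implicitFunction hsurj
  have hφg : ∀ᶠ z : f'.ker in 𝓝 0, φ (g z) = φ q := by
    have := hsφ.map_implicitFunction_eq hsurj
    exact (tendsto_const_nhds.prodMk_nhds tendsto_id).eventually this
  have hgU : ∀ᶠ z : f'.ker in 𝓝 0, g z ∈ U := by
    have : Tendsto g (𝓝 0) (𝓝 q) := hg0 ▸ hg'.continuousAt
    exact this.eventually_mem hnhd
  have hq0 : φ q = 0 := (hφ0 q hqU).1 hq.2
  have hψg : ∀ᶠ z : f'.ker in 𝓝 0, ψ (g z) = 0 := by
    filter_upwards [hφg, hgU] with z h1 h2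
    exact (hψ0 _ h2).1 ((hφ0 _ h2).2 (h1.trans hq0))
  have hψg0 : HasStrictFDerivAt ψ (fderiv ℝ ψ q) (g 0) := by rw [hg0]; exact hsψ
  have hcomp : HasStrictFDerivAt (ψ ∘ g)
      ((fderiv ℝ ψ q).comp f'.ker.subtypeL) 0 := hψg0.comp 0 hg'
  have hzero : (fderiv ℝ ψ q).comp f'.ker.subtypeL = 0 := by
    have h1 : HasFDerivAt (ψ ∘ g) ((fderiv ℝ ψ q).comp f'.ker.subtypeL) 0 :=
      hcomp.hasFDerivAt
    have h2 : HasFDerivAt (fun _ : f'.ker => (0 : ℝ))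
        ((fderiv ℝ ψ q).comp f'.ker.subtypeL) 0 := by
      refine h1.congr_of_eventuallyEq ?_
      filter_upwards [hψg] with z hz using hz.symm
    have h3 := h2.fderiv
    rw [fderiv_const_apply] at h3
    simpa using h3.symm
  intro v hv
  have := congrFun (congrArg DFunLike.coe hzero) ⟨v, hv⟩
  simpa using this



/-- Proposition 2.2: independence of the choice of admissible function.
    If φ and ψ are two admissible functions for the hypersurface S near p (both have
    U ∩ S as their zero set and nonvanishing differential there) and η̃ is a smooth
    vector field, then at each point q of U ∩ S one has
    dψ(η̃)(q) = c · dφ(η̃)(q) with c ≠ 0 (c = ∂ψ/∂xⁿ in coordinates with xⁿ = φ);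
    in particular the zero sets of dφ(η̃) and dψ(η̃) within U ∩ S coincide. -/
theorem stmt12 (n : ℕ) (S U : Set (Fin n → ℝ)) (hU : IsOpen U)
    (p : Fin n → ℝ) (hp : p ∈ U ∩ S)
    (φ ψ : (Fin n → ℝ) → ℝ)
    (hφ : ContDiffOn ℝ (⊤ : ℕ∞) φ U) (hψ : ContDiffOn ℝ (⊤ : ℕ∞) ψ U)
    (hφ0 : ∀ q ∈ U, (q ∈ S ↔ φ q = 0))
    (hψ0 : ∀ q ∈ U, (q ∈ S ↔ ψ q = 0))
    (hdφ : ∀ q ∈ U ∩ S, fderiv ℝ φ q ≠ 0)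
    (hdψ : ∀ q ∈ U ∩ S, fderiv ℝ ψ q ≠ 0)
    (η : (Fin n → ℝ) → Fin n → ℝ) (hη : ContDiffOn ℝ (⊤ : ℕ∞) η U) :
    (∀ q ∈ U ∩ S, ∃ c : ℝ, c ≠ 0 ∧
        fderiv ℝ ψ q (η q) = c * fderiv ℝ φ q (η q)) ∧
    {q ∈ U ∩ S | fderiv ℝ φ q (η q) = 0} = {q ∈ U ∩ S | fderiv ℝ ψ q (η q) = 0} := by
  have main : ∀ q ∈ U ∩ S, ∃ c : ℝ, c ≠ 0 ∧
      ∀ w, fderiv ℝ ψ q w = c * fderiv ℝ φ q w := by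
    intro q hq
    have hker := ker_le_ker_aux hU hφ hψ hφ0 hψ0 hq (hdφ q hq)
    obtain ⟨v, hv⟩ : ∃ v, fderiv ℝ φ q v ≠ 0 := by
      by_contra h; push_neg at h
      exact hdφ q hq (ContinuousLinearMap.ext fun x => h x)
    set c := fderiv ℝ ψ q v / fderiv ℝ φ q v with hc
    have hmul : ∀ w, fderiv ℝ ψ q w = c * fderiv ℝ φ q w := by
      intro w
      have hk : fderiv ℝ φ q (w - (fderiv ℝ φ q w / fderiv ℝ φ q v) • v) = 0 := by
        simp [div_mul_cancel₀, hv]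
      have := hker _ hk
      simp only [map_sub, map_smul, smul_eq_mul, sub_eq_zero] at this
      rw [this, hc]; ring
    refine ⟨c, ?_, hmul⟩
    intro hc0
    apply hdψ q hq
    ext w
    simp [hmul w, hc0]
  refine ⟨fun q hq => by obtain ⟨c, hc0, hm⟩ := main q hq; exact ⟨c, hc0, hm _⟩, ?_⟩
  ext q
  simp only [Set.mem_setOf_eq, Set.mem_sep_iff]
  refine and_congr_right fun hq => ?_
  obtain ⟨c, hc0, hm⟩ := main q hq
  rw [hm (η q)]
  constructor
  · intro h; rw [h, mul_zero]
  · intro h; exact (mul_eq_zero.1 h).resolve_left hc0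
end

section
/- Let γ : I → ℝ² be smooth with a 3/2-cusp at t₀ (γ'(t₀)=0, det(γ''(t₀),γ'''(t₀)) ≠ 0) and γ(t₀) = 0. Then there exist a rotation R ∈ SO(2), a smooth reparametrization s(t) with s(t₀)=0, s'(t₀) > 0, and α ≠ 0 such that R·γ(t) = (α s(t)³, s(t)²) + o(s(t)³) as t → t₀. -/
open Filter

/-- det of the 2×2 matrix with columns v, w. -/
def det2 (v w : ℝ × ℝ) : ℝ := v.1 * w.2 - v.2 * w.1

/-- Rotation of the plane by angle θ. -/
noncomputable def rot (θ : ℝ) (p : ℝ × ℝ) : ℝ × ℝ :=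
  (Real.cos θ * p.1 - Real.sin θ * p.2, Real.sin θ * p.1 + Real.cos θ * p.2)

section helpers
open Asymptotics ContDiff

lemma abs_le_of_uIcc {t₀ t x : ℝ} (hx : x ∈ Set.uIcc t₀ t) : |x - t₀| ≤ |t - t₀| := by
  rw [Set.mem_uIcc] at hx
  rcases hx with ⟨h1, h2⟩ | ⟨h1, h2⟩
  · rw [abs_of_nonneg (by linarith), abs_of_nonneg (by linarith)]; linarith
  · rw [abs_of_nonpos (by linarith), abs_of_nonpos (by linarith)]; linarith

/-- MVT step lemma for Peano remainders. -/
lemma step14 {E : Type*} [NormedAddCommGroup E] [NormedSpace ℝ E] {g g' : ℝ → E} {t₀ : ℝ} {n : ℕ}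
    (hd : ∀ t, HasDerivAt g (g' t) t) (h0 : g t₀ = 0)
    (h : g' =o[nhds t₀] fun t => (t - t₀) ^ n) :
    g =o[nhds t₀] fun t => (t - t₀) ^ (n + 1) := by
  rw [isLittleO_iff] at h ⊢
  intro c hc
  have h' := h hc
  rw [Metric.eventually_nhds_iff] at h' ⊢
  obtain ⟨δ, hδ, hb⟩ := h'
  refine ⟨δ, hδ, fun t ht => ?_⟩
  rw [Real.dist_eq] at ht
  have key : ‖g t - g t₀‖ ≤ (c * |t - t₀| ^ n) * ‖t - t₀‖ := by
    apply (convex_uIcc t₀ t).norm_image_sub_le_of_norm_hasDerivWithin_le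
      (f' := g') (fun x _ => (hd x).hasDerivWithinAt) ?_
      Set.left_mem_uIcc Set.right_mem_uIcc
    intro x hx
    have hle : |x - t₀| ≤ |t - t₀| := abs_le_of_uIcc hx
    have hxd : dist x t₀ < δ := by rw [Real.dist_eq]; linarith
    refine (hb hxd).trans ?_
    have hpow : ‖(x - t₀) ^ n‖ ≤ |t - t₀| ^ n := by
      rw [Real.norm_eq_abs, abs_pow]
      exact pow_le_pow_left₀ (abs_nonneg _) hle n
    nlinarith [norm_nonneg ((x - t₀) ^ n), hc.le]
  rw [h0, sub_zero] at key
  calc ‖g t‖ ≤ (c * |t - t₀| ^ n) * ‖t - t₀‖ := key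
    _ = c * ‖(t - t₀) ^ (n + 1)‖ := by
        rw [Real.norm_eq_abs, Real.norm_eq_abs, abs_pow]; ring

/-- Third-order Taylor expansion with Peano remainder. -/
lemma peano3 {E : Type*} [NormedAddCommGroup E] [NormedSpace ℝ E] {γ : ℝ → E}
    (hγ : ContDiff ℝ ∞ γ) (t₀ : ℝ) :
    (fun t => γ t - γ t₀ - (t - t₀) • deriv γ t₀ - ((t - t₀) ^ 2 / 2) • iteratedDeriv 2 γ t₀
      - ((t - t₀) ^ 3 / 6) • iteratedDeriv 3 γ t₀) =o[nhds t₀] fun t => (t - t₀) ^ 3 := by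
  set D1 := deriv γ with hD1
  set D2 := deriv D1 with hD2
  set D3 := deriv D2 with hD3
  have hγ1 : ContDiff ℝ ∞ D1 := (contDiff_infty_iff_deriv.mp hγ).2
  have hγ2 : ContDiff ℝ ∞ D2 := (contDiff_infty_iff_deriv.mp hγ1).2
  have hi2 : iteratedDeriv 2 γ t₀ = D2 t₀ := by
    rw [show (2:ℕ) = 1 + 1 from rfl, iteratedDeriv_succ, iteratedDeriv_one]
  have hi3 : iteratedDeriv 3 γ t₀ = D3 t₀ := by
    rw [show (3:ℕ) = 2 + 1 from rfl, iteratedDeriv_succ]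
    congr 1
    funext t
    rw [show (2:ℕ) = 1 + 1 from rfl, iteratedDeriv_succ, iteratedDeriv_one]
  rw [hi2, hi3]
  have h1 : (fun t => D2 t - D2 t₀ - (t - t₀) • D3 t₀) =o[nhds t₀] fun t => (t - t₀) ^ 1 := by
    have := hasDerivAt_iff_isLittleO.mp ((hγ2.differentiable (by norm_num) t₀).hasDerivAt)
    simpa [pow_one] using this
  have h2 : (fun t => D1 t - D1 t₀ - (t - t₀) • D2 t₀ - ((t - t₀) ^ 2 / 2) • D3 t₀)
      =o[nhds t₀] fun t => (t - t₀) ^ 2 := by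
    apply step14 (g' := fun t => D2 t - D2 t₀ - (t - t₀) • D3 t₀) ?_ (by simp) h1
    intro t
    have hA : HasDerivAt D1 (D2 t) t := (hγ1.differentiable (by norm_num) t).hasDerivAt
    have hB : HasDerivAt (fun t => (t - t₀) • D2 t₀) ((1:ℝ) • D2 t₀) t :=
      ((hasDerivAt_id t).sub_const t₀).smul_const _
    have hC : HasDerivAt (fun t => ((t - t₀) ^ 2 / 2) • D3 t₀) ((t - t₀) • D3 t₀) t := by
      have h0 : HasDerivAt (fun t => (t - t₀) ^ 2 / 2) ((↑2 * (t - t₀) ^ (2-1) * 1) / 2) t :=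
        ((((hasDerivAt_id t).sub_const t₀)).pow 2).div_const 2
      have h' : HasDerivAt (fun t => (t - t₀) ^ 2 / 2) (t - t₀) t := by
        convert h0 using 1; push_cast; ring
      exact h'.smul_const _
    have := ((hA.sub_const (D1 t₀)).sub hB).sub hC
    convert this using 1
    · rfl
    simp
  apply step14 (g' := fun t => D1 t - D1 t₀ - (t - t₀) • D2 t₀ - ((t - t₀) ^ 2 / 2) • D3 t₀)
    ?_ (by simp) h2
  intro t
  have hA : HasDerivAt γ (D1 t) t := (hγ.differentiable (by norm_num) t).hasDerivAt
  have hB : HasDerivAt (fun t => (t - t₀) • D1 t₀) ((1:ℝ) • D1 t₀) t :=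
    ((hasDerivAt_id t).sub_const t₀).smul_const _
  have hC : HasDerivAt (fun t => ((t - t₀) ^ 2 / 2) • D2 t₀) ((t - t₀) • D2 t₀) t := by
    have h0 : HasDerivAt (fun t => (t - t₀) ^ 2 / 2) ((↑2 * (t - t₀) ^ (2-1) * 1) / 2) t :=
      ((((hasDerivAt_id t).sub_const t₀)).pow 2).div_const 2
    have h' : HasDerivAt (fun t => (t - t₀) ^ 2 / 2) (t - t₀) t := by
      convert h0 using 1; push_cast; ring
    exact h'.smul_const _
  have hD : HasDerivAt (fun t => ((t - t₀) ^ 3 / 6) • D3 t₀) (((t - t₀) ^ 2 / 2) • D3 t₀) t := by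
    have h0 : HasDerivAt (fun t => (t - t₀) ^ 3 / 6) ((↑3 * (t - t₀) ^ (3-1) * 1) / 6) t :=
      ((((hasDerivAt_id t).sub_const t₀)).pow 3).div_const 6
    have h' : HasDerivAt (fun t => (t - t₀) ^ 3 / 6) ((t - t₀) ^ 2 / 2) t := by
      convert h0 using 1; push_cast; ring
    exact h'.smul_const _
  have := (((hA.sub_const (γ t₀)).sub hB).sub hC).sub hD
  convert this using 1
  · rfl
  simp

lemma rot_norm_le (θ : ℝ) (p : ℝ × ℝ) : ‖rot θ p‖ ≤ 2 * ‖p‖ := by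
  have hc := Real.abs_cos_le_one θ
  have hs := Real.abs_sin_le_one θ
  have h1 : |p.1| ≤ ‖p‖ := by rw [Prod.norm_def]; exact le_max_left _ _
  have h2 : |p.2| ≤ ‖p‖ := by rw [Prod.norm_def]; exact le_max_right _ _
  rw [rot, Prod.norm_def]
  apply max_le
  · rw [Real.norm_eq_abs]
    calc |Real.cos θ * p.1 - Real.sin θ * p.2| ≤ |Real.cos θ * p.1| + |Real.sin θ * p.2| := by
          rw [sub_eq_add_neg]; exact (abs_add_le _ _).trans (by rw [abs_neg])
      _ ≤ 2 * ‖p‖ := by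
          rw [abs_mul, abs_mul]
          nlinarith [abs_nonneg p.1, abs_nonneg p.2, abs_nonneg (Real.cos θ),
            abs_nonneg (Real.sin θ), norm_nonneg p]
  · rw [Real.norm_eq_abs]
    calc |Real.sin θ * p.1 + Real.cos θ * p.2| ≤ |Real.sin θ * p.1| + |Real.cos θ * p.2| :=
          abs_add_le _ _
      _ ≤ 2 * ‖p‖ := by
          rw [abs_mul, abs_mul]
          nlinarith [abs_nonneg p.1, abs_nonneg p.2, abs_nonneg (Real.cos θ),
            abs_nonneg (Real.sin θ), norm_nonneg p]

lemma aux4 (t₀ : ℝ) (P : ℝ → ℝ) (hP : Continuous P) :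
    (fun t => (t - t₀) ^ 4 * P t) =o[nhds t₀] fun t => (t - t₀) ^ 3 := by
  rw [isLittleO_iff]
  intro c hc
  have htend : Filter.Tendsto (fun t => |(t - t₀) * P t|) (nhds t₀) (nhds 0) := by
    have : Filter.Tendsto (fun t => (t - t₀) * P t) (nhds t₀) (nhds ((t₀ - t₀) * P t₀)) :=
      ((continuous_id.sub continuous_const).mul hP).continuousAt
    simpa using this.abs
  filter_upwards [htend.eventually (ge_mem_nhds hc)] with t ht
  have heq : ‖(t - t₀) ^ 4 * P t‖ = |(t - t₀) * P t| * ‖(t - t₀) ^ 3‖ := by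
    rw [Real.norm_eq_abs, Real.norm_eq_abs, ← abs_mul]; ring_nf
  rw [heq]
  exact mul_le_mul_of_nonneg_right ht (norm_nonneg _)

end helpers

/-- Normal form at a 3/2-cusp: if γ has a 3/2-cusp at t₀ with γ(t₀) = 0, then after a
    rotation and a smooth reparametrization s (s(t₀) = 0, s'(t₀) > 0) one has
    γ = (α s³, s²) + o(s³) for some α ≠ 0. -/
theorem stmt14 (γ : ℝ → ℝ × ℝ) (I : Set ℝ) (hI : IsOpen I)
    (hγ : ContDiff ℝ (⊤ : ℕ∞) γ) (t₀ : ℝ) (ht₀ : t₀ ∈ I)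
    (hcusp1 : deriv γ t₀ = 0)
    (hcusp2 : det2 (iteratedDeriv 2 γ t₀) (iteratedDeriv 3 γ t₀) ≠ 0)
    (h0 : γ t₀ = 0) :
    ∃ (θ : ℝ) (s : ℝ → ℝ) (α : ℝ),
      ContDiff ℝ (⊤ : ℕ∞) s ∧ s t₀ = 0 ∧ 0 < deriv s t₀ ∧ α ≠ 0 ∧
      (fun t => rot θ (γ t) - (α * s t ^ 3, s t ^ 2))
        =o[nhds t₀] (fun t => s t ^ 3) := by
  classical
  set a2 := iteratedDeriv 2 γ t₀ with ha2def
  set a3 := iteratedDeriv 3 γ t₀ with ha3def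
  have ha2 : a2 ≠ 0 := by
    intro h
    apply hcusp2
    simp [det2, ← ha2def, ← ha3def, h]
  have hsq : 0 < a2.1 ^ 2 + a2.2 ^ 2 := by
    rcases (by by_contra h; push_neg at h; exact ha2 (Prod.ext h.1 h.2) :
        a2.1 ≠ 0 ∨ a2.2 ≠ 0) with h | h
    · nlinarith [(sq_nonneg a2.1).lt_of_ne (Ne.symm (pow_ne_zero 2 h)), sq_nonneg a2.2]
    · nlinarith [(sq_nonneg a2.2).lt_of_ne (Ne.symm (pow_ne_zero 2 h)), sq_nonneg a2.1]
  set r := Real.sqrt (a2.1 ^ 2 + a2.2 ^ 2) with hrdef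
  have hr2 : r ^ 2 = a2.1 ^ 2 + a2.2 ^ 2 := Real.sq_sqrt hsq.le
  have hrpos : 0 < r := Real.sqrt_pos.mpr hsq
  -- the rotation angle
  set z : ℂ := Complex.mk a2.2 a2.1 with hzdef
  have hz0 : z ≠ 0 := by
    intro h
    apply ha2
    have h1 : z.re = 0 := by rw [h]; simp
    have h2 : z.im = 0 := by rw [h]; simp
    exact Prod.ext h2 h1
  have habs : ‖z‖ = r := by
    rw [Complex.norm_def, Complex.normSq_apply, hrdef]
    rw [hzdef]
    norm_num
    ring_nf
  set θ := Complex.arg z with hθdef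
  have hcos : Real.cos θ = a2.2 / r := by rw [hθdef, Complex.cos_arg hz0, habs]
  have hsin : Real.sin θ = a2.1 / r := by rw [hθdef, Complex.sin_arg, habs]
  have hA1 : Real.cos θ * a2.1 - Real.sin θ * a2.2 = 0 := by
    rw [hcos, hsin]; field_simp; ring
  have hA2 : Real.sin θ * a2.1 + Real.cos θ * a2.2 = r := by
    rw [hcos, hsin]; field_simp; nlinarith [hr2]
  set B := rot θ a3 with hBdef
  have hBd1 : Real.cos θ * a3.1 - Real.sin θ * a3.2 = B.1 := by rw [hBdef, rot]
  have hBd2 : Real.sin θ * a3.1 + Real.cos θ * a3.2 = B.2 := by rw [hBdef, rot]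
  have hB1 : B.1 ≠ 0 := by
    intro h
    apply hcusp2
    have hdet : det2 (rot θ a2) (rot θ a3) = det2 a2 a3 := by
      simp only [det2, rot]
      linear_combination (a2.1 * a3.2 - a2.2 * a3.1) * (Real.sin_sq_add_cos_sq θ)
    have hrA : rot θ a2 = (0, r) := by
      rw [rot, hcos, hsin, Prod.mk.injEq]
      constructor
      · field_simp; ring
      · field_simp; nlinarith [hr2]
    rw [← hdet, hrA, ← hBdef, det2]
    simp [h]
  -- reparametrization data
  set c := Real.sqrt (r / 2) with hcdef
  have hcpos : 0 < c := Real.sqrt_pos.mpr (by linarith)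
  have hc2 : c ^ 2 = r / 2 := Real.sq_sqrt (by linarith)
  set d := B.2 / (12 * c) with hddef
  set α := B.1 / (6 * c ^ 3) with hαdef
  have hα : α ≠ 0 := div_ne_zero hB1 (by positivity)
  have hB1' : B.1 = 6 * c ^ 3 * α := by rw [hαdef]; field_simp
  have hB2' : B.2 = 12 * c * d := by rw [hddef]; field_simp
  set s : ℝ → ℝ := fun t => c * (t - t₀) + d * (t - t₀) ^ 2 with hsdef
  clear_value z θ r c d α B s a2 a3
  refine ⟨θ, s, α, ?_, by simp [hsdef], ?_, hα, ?_⟩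
  · rw [hsdef]
    exact ((contDiff_const.mul (contDiff_id.sub contDiff_const)).add
      (contDiff_const.mul ((contDiff_id.sub contDiff_const).pow 2)))
  · rw [hsdef]
    have hds : HasDerivAt (fun t => c * (t - t₀) + d * (t - t₀) ^ 2) (c * 1 + d * (↑2 * (t₀ - t₀) ^ (2-1) * 1)) t₀ :=
      (((hasDerivAt_id t₀).sub_const t₀).const_mul c).add
        ((((hasDerivAt_id t₀).sub_const t₀).pow 2).const_mul d)
    rw [hds.deriv]
    simpa using hcpos
  -- the asymptotic statement
  have hpe := peano3 (hγ.of_le (by simp)) t₀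
  rw [h0, hcusp1, ← ha2def, ← ha3def] at hpe
  simp only [sub_zero, smul_zero] at hpe
  set P₁ : ℝ → ℝ := fun t => -α * (3 * c ^ 2 * d + 3 * c * d ^ 2 * (t - t₀) + d ^ 3 * (t - t₀) ^ 2)
    with hP₁def
  set P₂ : ℝ → ℝ := fun t => -d ^ 2 with hP₂def
  have hfun : (fun t => rot θ (γ t) - (α * s t ^ 3, s t ^ 2))
      = fun t => rot θ (γ t - ((t - t₀) ^ 2 / 2) • a2 - ((t - t₀) ^ 3 / 6) • a3)
        + ((t - t₀) ^ 4 * P₁ t, (t - t₀) ^ 4 * P₂ t) := by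
    funext t
    apply Prod.ext
    all_goals simp only [rot, hsdef, hP₁def, hP₂def, Prod.fst_sub, Prod.fst_add, Prod.smul_fst,
      Prod.snd_sub, Prod.snd_add, Prod.smul_snd, smul_eq_mul, Prod.fst, Prod.snd]
    · linear_combination ((t - t₀) ^ 2 / 2) * hA1 + ((t - t₀) ^ 3 / 6) * (hBd1.trans hB1')
    · linear_combination ((t - t₀) ^ 2 / 2) * (hA2.trans (by linarith [hc2] : r = 2 * c ^ 2))
        + ((t - t₀) ^ 3 / 6) * (hBd2.trans hB2')
  have hG : (fun t => rot θ (γ t) - (α * s t ^ 3, s t ^ 2)) =o[nhds t₀]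
      fun t => (t - t₀) ^ 3 := by
    rw [hfun]
    apply Asymptotics.IsLittleO.add
    · exact (Asymptotics.IsBigO.of_bound 2
        (Filter.Eventually.of_forall fun t => rot_norm_le θ _)).trans_isLittleO hpe
    · exact Asymptotics.IsLittleO.prod_left (aux4 t₀ P₁ (by fun_prop)) (aux4 t₀ P₂ (by fun_prop))
  have hO : (fun t => (t - t₀) ^ 3) =O[nhds t₀] fun t => s t ^ 3 := by
    have hcont : Filter.Tendsto (fun t => |c + d * (t - t₀)|) (nhds t₀) (nhds c) := by
      have : Filter.Tendsto (fun t => c + d * (t - t₀)) (nhds t₀) (nhds (c + d * (t₀ - t₀))) :=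
        (continuous_const.add (continuous_const.mul (continuous_id.sub continuous_const))).continuousAt
      have habs := this.abs
      simpa [abs_of_pos hcpos] using habs
    apply Asymptotics.IsBigO.of_bound ((2 / c) ^ 3)
    filter_upwards [hcont.eventually (lt_mem_nhds (show c / 2 < c by linarith))] with t ht
    have hst : s t = (t - t₀) * (c + d * (t - t₀)) := by rw [hsdef]; ring
    have hp : (c / 2) ^ 3 ≤ |c + d * (t - t₀)| ^ 3 :=
      pow_le_pow_left₀ (by linarith) ht.le 3
    have hnorm : ‖s t ^ 3‖ = |t - t₀| ^ 3 * |c + d * (t - t₀)| ^ 3 := by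
      rw [Real.norm_eq_abs, hst, abs_pow, abs_mul, mul_pow]
    rw [hnorm, Real.norm_eq_abs, abs_pow]
    have h3 : 0 ≤ |t - t₀| ^ 3 := by positivity
    calc |t - t₀| ^ 3 = (2 / c) ^ 3 * (|t - t₀| ^ 3 * (c / 2) ^ 3) := by
          field_simp
      _ ≤ (2 / c) ^ 3 * (|t - t₀| ^ 3 * |c + d * (t - t₀)| ^ 3) := by
          apply mul_le_mul_of_nonneg_left (mul_le_mul_of_nonneg_left hp h3) (by positivity)
  exact hG.trans_isBigO hO
end

section
/- Let γ(s) = (α s³, s²) + o(s³) with α > 0, and let c be the cycloid of radius a = 2/(9α²), c(t) = a(t - sin t, 1 - cos t), reparametrized by s = t/(3α). Then γ(s) - c(t(s)) = o(s³) as s → 0; i.e., the cycloid of radius 2/(9α²) approximates γ to third order at the cusp. Moreover the absolute cuspidal curvature |μ| of γ at s=0 satisfies μ² = 1/a. -/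
open Filter

/-- Euclidean norm on ℝ × ℝ. -/
noncomputable def enorm2 (v : ℝ × ℝ) : ℝ := Real.sqrt (v.1 ^ 2 + v.2 ^ 2)

open Asymptotics


lemma littleO_step {E : Type*} [NormedAddCommGroup E] [NormedSpace ℝ E]
    {F : ℝ → E} (hF : Differentiable ℝ F) (h0 : F 0 = 0) {n : ℕ}
    (h : deriv F =o[nhds 0] fun s => s ^ n) :
    F =o[nhds 0] fun s => s ^ (n + 1) := by
  rw [isLittleO_iff] at h ⊢
  intro ε hε
  obtain ⟨δ, hδ, hd⟩ := Metric.eventually_nhds_iff.mp (h hε)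
  rw [Metric.eventually_nhds_iff]
  refine ⟨δ, hδ, fun s hs => ?_⟩
  rw [Real.dist_eq, sub_zero] at hs
  have habs : ∀ t ∈ Set.uIcc (0:ℝ) s, |t| ≤ |s| := by
    intro t ht
    rcases Set.mem_uIcc.mp ht with ⟨h1, h2⟩ | ⟨h1, h2⟩ <;> rw [abs_le] <;>
      constructor <;> nlinarith [abs_nonneg s, le_abs_self s, neg_abs_le s]
  have bound : ∀ t ∈ Set.uIcc (0:ℝ) s, ‖deriv F t‖ ≤ ε * |s| ^ n := by
    intro t ht
    have h1 : ‖deriv F t‖ ≤ ε * ‖t ^ n‖ := by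
      apply hd; rw [Real.dist_eq, sub_zero]; exact lt_of_le_of_lt (habs t ht) hs
    calc ‖deriv F t‖ ≤ ε * ‖t ^ n‖ := h1
      _ ≤ ε * |s| ^ n := by
          rw [Real.norm_eq_abs, abs_pow]
          exact mul_le_mul_of_nonneg_left (pow_le_pow_left₀ (abs_nonneg t) (habs t ht) n) hε.le
  have key := Convex.norm_image_sub_le_of_norm_deriv_le
    (fun x _ => hF x) bound (convex_uIcc 0 s)
    (Set.left_mem_uIcc) (Set.right_mem_uIcc)
  rw [h0, sub_zero, sub_zero] at key
  calc ‖F s‖ ≤ ε * |s| ^ n * ‖s‖ := key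
    _ = ε * ‖s ^ (n+1)‖ := by rw [Real.norm_eq_abs, Real.norm_eq_abs, abs_pow]; ring

lemma peano {E : Type*} [NormedAddCommGroup E] [NormedSpace ℝ E] :
    ∀ (n : ℕ) (f : ℝ → E), ContDiff ℝ (⊤:ℕ∞) f →
      (fun s => f s - ∑ k ∈ Finset.range (n+1),
          (s ^ k / (k.factorial : ℝ)) • iteratedDeriv k f 0)
        =o[nhds 0] fun s => s ^ n := by
  intro n
  induction n with
  | zero =>
    intro f hf
    simp only [Finset.range_one, Finset.sum_singleton, pow_zero, Nat.factorial_zero,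
      Nat.cast_one, div_one, one_smul, iteratedDeriv_zero]
    rw [isLittleO_one_iff]
    have := (hf.continuous.tendsto 0).sub (tendsto_const_nhds (x := f 0))
    simpa using this
  | succ n ih =>
    intro f hf
    have hg : ContDiff ℝ (⊤:ℕ∞) (deriv f) := (contDiff_infty_iff_deriv.mp hf).2
    set g := deriv f with hgdef
    have hdterm : ∀ k : ℕ, Differentiable ℝ (fun s : ℝ =>
        (s ^ k / (k.factorial : ℝ)) • iteratedDeriv k f 0) := by
      intro k
      exact ((differentiable_pow k).div_const _).smul_const _
    have hFdiff : Differentiable ℝ (fun s => f s - ∑ k ∈ Finset.range (n+2),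
        (s ^ k / (k.factorial : ℝ)) • iteratedDeriv k f 0) := by
      exact (hf.differentiable (by norm_num)).sub
        (Differentiable.fun_sum fun k _ => hdterm k)
    have h0 : (fun s => f s - ∑ k ∈ Finset.range (n+2),
        (s ^ k / (k.factorial : ℝ)) • iteratedDeriv k f 0) 0 = 0 := by
      simp [Finset.sum_range_succ', zero_pow, iteratedDeriv_zero]
    have hderiv : deriv (fun s => f s - ∑ k ∈ Finset.range (n+2),
        (s ^ k / (k.factorial : ℝ)) • iteratedDeriv k f 0)
        = fun s => g s - ∑ k ∈ Finset.range (n+1),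
          (s ^ k / (k.factorial : ℝ)) • iteratedDeriv k g 0 := by
      funext s
      rw [deriv_fun_sub ((hf.differentiable (by norm_num)) s)
        ((Differentiable.fun_sum fun k _ => hdterm k) s)]
      rw [deriv_fun_sum (fun k _ => hdterm k s)]
      congr 1
      have hterm : ∀ k : ℕ, deriv (fun s : ℝ =>
          (s ^ k / (k.factorial : ℝ)) • iteratedDeriv k f 0) s
          = ((k : ℝ) * s ^ (k-1) / (k.factorial : ℝ)) • iteratedDeriv k f 0 := by
        intro k
        rw [deriv_smul_const ((differentiable_pow k).div_const _ s),
          deriv_div_const, deriv_pow_field]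
      rw [Finset.sum_congr rfl (fun k _ => hterm k)]
      rw [Finset.sum_range_succ']
      simp only [Nat.cast_zero, zero_mul, zero_div, zero_smul, add_zero]
      apply Finset.sum_congr rfl
      intro k _
      rw [iteratedDeriv_succ']
      congr 1
      rw [Nat.factorial_succ]
      push_cast
      have : (k.factorial : ℝ) ≠ 0 := Nat.cast_ne_zero.mpr (Nat.factorial_ne_zero k)
      field_simp
    have := littleO_step hFdiff h0 (n := n) (by rw [hderiv]; exact ih g hg)
    exact this

lemma vanish {q : ℝ → ℝ} {m n : ℕ} (hq : Continuous q)
    (h : (fun s => s ^ m * q s) =o[nhds 0] fun s => s ^ (m + n)) : q 0 = 0 := by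
  have h1 : q =o[nhdsWithin 0 {0}ᶜ] fun s => s ^ n := by
    rw [isLittleO_iff] at h ⊢
    intro ε hε
    filter_upwards [(h hε).filter_mono nhdsWithin_le_nhds, self_mem_nhdsWithin] with s hs hs0
    have hs0' : (0:ℝ) < |s| ^ m := pow_pos (abs_pos.mpr hs0) m
    rw [Real.norm_eq_abs, Real.norm_eq_abs, abs_mul, abs_pow, abs_pow] at hs
    rw [Real.norm_eq_abs, Real.norm_eq_abs, abs_pow]
    have hkey : |s| ^ m * |q s| ≤ |s| ^ m * (ε * |s| ^ n) := by
      calc |s| ^ m * |q s| ≤ ε * |s| ^ (m + n) := hs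
        _ = |s| ^ m * (ε * |s| ^ n) := by rw [pow_add]; ring
    exact le_of_mul_le_mul_left hkey hs0'
  have hO : (fun s : ℝ => s ^ n) =O[nhdsWithin 0 {0}ᶜ] (fun _ => (1:ℝ)) :=
    (((continuous_pow n).tendsto 0).mono_left nhdsWithin_le_nhds).isBigO_one ℝ
  have h2 := h1.trans_isBigO hO
  rw [isLittleO_one_iff] at h2
  exact tendsto_nhds_unique ((hq.tendsto 0).mono_left nhdsWithin_le_nhds) h2

lemma cubic_coeffs {c0 c1 c2 c3 : ℝ}
    (h : (fun s : ℝ => c0 + c1 * s + c2 * s ^ 2 + c3 * s ^ 3) =o[nhds 0] fun s => s ^ 3) :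
    c0 = 0 ∧ c1 = 0 ∧ c2 = 0 ∧ c3 = 0 := by
  have h0 : c0 = 0 := by
    have := vanish (q := fun s => c0 + c1 * s + c2 * s ^ 2 + c3 * s ^ 3) (m := 0) (n := 3)
      (by fun_prop) (by simpa using h)
    simpa using this
  have h1 : c1 = 0 := by
    have := vanish (q := fun s => c1 + c2 * s + c3 * s ^ 2) (m := 1) (n := 2)
      (by fun_prop) (by
        have e : (fun s : ℝ => s ^ 1 * (c1 + c2 * s + c3 * s ^ 2))
            = fun s : ℝ => c0 + c1 * s + c2 * s ^ 2 + c3 * s ^ 3 := by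
          funext s; rw [h0]; ring
        rw [e]; exact h)
    simpa using this
  have h2 : c2 = 0 := by
    have := vanish (q := fun s => c2 + c3 * s) (m := 2) (n := 1)
      (by fun_prop) (by
        have e : (fun s : ℝ => s ^ 2 * (c2 + c3 * s))
            = fun s : ℝ => c0 + c1 * s + c2 * s ^ 2 + c3 * s ^ 3 := by
          funext s; rw [h0, h1]; ring
        rw [e]; exact h)
    simpa using this
  have h3 : c3 = 0 := by
    have := vanish (q := fun _ => c3) (m := 3) (n := 0)
      (by fun_prop) (by
        have e : (fun s : ℝ => s ^ 3 * c3)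
            = fun s : ℝ => c0 + c1 * s + c2 * s ^ 2 + c3 * s ^ 3 := by
          funext s; rw [h0, h1, h2]; ring
        rw [show (3+0 : ℕ) = 3 by norm_num, e]; exact h)
    simpa using this
  exact ⟨h0, h1, h2, h3⟩

lemma sin_expand : (fun t : ℝ => Real.sin t - (t - t ^ 3 / 6)) =o[nhds 0] fun t => t ^ 3 := by
  have h := peano 3 Real.sin Real.contDiff_sin
  have i1 : iteratedDeriv 1 Real.sin = Real.cos := by
    rw [iteratedDeriv_one, Real.deriv_sin]
  have i2 : iteratedDeriv 2 Real.sin = fun x => -Real.sin x := by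
    rw [show (2:ℕ) = 1+1 from rfl, iteratedDeriv_succ', Real.deriv_sin, iteratedDeriv_one,
      Real.deriv_cos']
  have i3 : iteratedDeriv 3 Real.sin = fun x => -Real.cos x := by
    rw [show (3:ℕ) = 2+1 from rfl, iteratedDeriv_succ, i2]
    funext x
    simp
  refine h.congr_left fun t => ?_
  rw [Finset.sum_range_succ, Finset.sum_range_succ, Finset.sum_range_succ, Finset.sum_range_one]
  simp [iteratedDeriv_zero, i1, i2, i3, Nat.factorial]
  ring

lemma cos_expand : (fun t : ℝ => Real.cos t - (1 - t ^ 2 / 2)) =o[nhds 0] fun t => t ^ 3 := by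
  have h := peano 3 Real.cos Real.contDiff_cos
  have i1 : iteratedDeriv 1 Real.cos = fun x => -Real.sin x := by
    rw [iteratedDeriv_one, Real.deriv_cos']
  have i2 : iteratedDeriv 2 Real.cos = fun x => -Real.cos x := by
    rw [show (2:ℕ) = 1+1 from rfl, iteratedDeriv_succ, i1]
    funext x
    simp
  have i3 : iteratedDeriv 3 Real.cos = fun x => Real.sin x := by
    rw [show (3:ℕ) = 2+1 from rfl, iteratedDeriv_succ, i2]
    funext x
    simp
  refine h.congr_left fun t => ?_
  rw [Finset.sum_range_succ, Finset.sum_range_succ, Finset.sum_range_succ, Finset.sum_range_one]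
  simp [iteratedDeriv_zero, i1, i2, i3, Nat.factorial]
  ring

/-- If γ(s) = (α s³, s²) + o(s³) with α > 0, then the cycloid of radius a = 2/(9α²),
    reparametrized by t = 3αs, approximates γ to third order at the cusp:
    γ(s) - c(3αs) = o(s³); moreover the cuspidal curvature μ of γ at s = 0
    satisfies μ² = 1/a. -/
theorem stmt15 (γ : ℝ → ℝ × ℝ) (hγ : ContDiff ℝ (⊤ : ℕ∞) γ)
    (α : ℝ) (hα : 0 < α)
    (hexp : (fun s => γ s - (α * s ^ 3, s ^ 2)) =o[nhds 0] (fun s => s ^ 3))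
    (a : ℝ) (haa : a = 2 / (9 * α ^ 2))
    (c : ℝ → ℝ × ℝ)
    (hc : c = fun t => (a * (t - Real.sin t), a * (1 - Real.cos t)))
    (μ : ℝ)
    (hμ : μ = det2 (iteratedDeriv 2 γ 0) (iteratedDeriv 3 γ 0)
        / (enorm2 (iteratedDeriv 2 γ 0)) ^ ((5:ℝ)/2)) :
    ((fun s => γ s - c (3 * α * s)) =o[nhds 0] (fun s => s ^ 3)) ∧
    μ ^ 2 = 1 / a := by
  have hα' : α ≠ 0 := ne_of_gt hα
  constructor
  · -- cycloid approximation
    have ttend : Tendsto (fun s : ℝ => 3 * α * s) (nhds 0) (nhds 0) := by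
      have h := ((continuous_const.mul continuous_id :
        Continuous (fun s : ℝ => (3 * α) * s))).tendsto (0:ℝ)
      simp only [Pi.mul_def, mul_zero] at h
      exact h.congr fun s => by ring
    have hbig : (fun s : ℝ => (3 * α * s) ^ 3) =O[nhds 0] fun s => s ^ 3 :=
      ((isBigO_refl (fun s : ℝ => s ^ 3) (nhds 0)).const_mul_left (27 * α ^ 3)).congr_left
        fun s => by ring
    have hsinc := (sin_expand.comp_tendsto ttend).trans_isBigO hbig
    have hcosc := (cos_expand.comp_tendsto ttend).trans_isBigO hbig
    have comp1 : (fun s => α * s ^ 3 - a * (3 * α * s - Real.sin (3 * α * s)))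
        =o[nhds 0] fun s => s ^ 3 := by
      refine (hsinc.const_mul_left a).congr_left fun s => ?_
      simp only [Function.comp]
      rw [haa]
      field_simp
      ring
    have comp2 : (fun s => s ^ 2 - a * (1 - Real.cos (3 * α * s)))
        =o[nhds 0] fun s => s ^ 3 := by
      refine (hcosc.const_mul_left a).congr_left fun s => ?_
      simp only [Function.comp]
      rw [haa]
      field_simp
      ring
    have hpair : (fun s => ((α * s ^ 3, s ^ 2) : ℝ × ℝ) - c (3 * α * s))
        =o[nhds 0] fun s => s ^ 3 := by
      rw [hc]
      refine (comp1.prod_left comp2).congr_left fun s => ?_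
      rw [Prod.mk_sub_mk]
    exact (hexp.add hpair).congr_left fun s => sub_add_sub_cancel _ _ _
  · -- cuspidal curvature
    have hpe := peano 3 γ (hγ.of_le (by simp))
    have hsum : (fun s => (∑ k ∈ Finset.range 4,
        (s ^ k / (k.factorial : ℝ)) • iteratedDeriv k γ 0) - ((α * s ^ 3, s ^ 2) : ℝ × ℝ))
        =o[nhds 0] fun s => s ^ 3 :=
      (hexp.sub hpe).congr_left fun s => by abel
    have hsum4 : ∀ s : ℝ, (∑ k ∈ Finset.range 4,
        (s ^ k / (k.factorial : ℝ)) • iteratedDeriv k γ 0)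
        = γ 0 + s • iteratedDeriv 1 γ 0 + (s ^ 2 / 2) • iteratedDeriv 2 γ 0
          + (s ^ 3 / 6) • iteratedDeriv 3 γ 0 := by
      intro s
      rw [Finset.sum_range_succ, Finset.sum_range_succ, Finset.sum_range_succ,
        Finset.sum_range_one]
      norm_num [iteratedDeriv_zero, Nat.factorial]
    have h1 := cubic_coeffs (c0 := (γ 0).1) (c1 := (iteratedDeriv 1 γ 0).1)
      (c2 := (iteratedDeriv 2 γ 0).1 / 2) (c3 := (iteratedDeriv 3 γ 0).1 / 6 - α)
      ((isBigO_fst_prod'.trans_isLittleO hsum).congr_left fun s => by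
        rw [hsum4 s]
        simp [smul_eq_mul]
        ring)
    have h2 := cubic_coeffs (c0 := (γ 0).2) (c1 := (iteratedDeriv 1 γ 0).2)
      (c2 := (iteratedDeriv 2 γ 0).2 / 2 - 1) (c3 := (iteratedDeriv 3 γ 0).2 / 6)
      ((isBigO_snd_prod'.trans_isLittleO hsum).congr_left fun s => by
        rw [hsum4 s]
        simp [smul_eq_mul]
        ring)
    have d21 : (iteratedDeriv 2 γ 0).1 = 0 := by have := h1.2.2.1; linarith
    have d31 : (iteratedDeriv 3 γ 0).1 = 6 * α := by have := h1.2.2.2; linarith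
    have d22 : (iteratedDeriv 2 γ 0).2 = 2 := by have := h2.2.2.1; linarith
    have d32 : (iteratedDeriv 3 γ 0).2 = 0 := by have := h2.2.2.2; linarith
    rw [hμ, det2, enorm2, d21, d31, d22, d32]
    have hsq : Real.sqrt ((0:ℝ) ^ 2 + 2 ^ 2) = 2 := by
      rw [show ((0:ℝ) ^ 2 + 2 ^ 2) = 2 ^ 2 by norm_num, Real.sqrt_sq (by norm_num : (0:ℝ) ≤ 2)]
    rw [hsq]
    have h32 : ((2:ℝ) ^ ((5:ℝ)/2)) ^ 2 = 32 := by
      rw [← Real.rpow_natCast ((2:ℝ) ^ ((5:ℝ)/2)) 2, ← Real.rpow_mul (by norm_num : (0:ℝ) ≤ 2)]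
      rw [show ((5:ℝ)/2 * (2:ℕ)) = ((5:ℕ):ℝ) by push_cast; ring, Real.rpow_natCast]
      norm_num
    rw [div_pow, h32, haa]
    field_simp
    ring
end

section
/- On the incidence chart: fix indices i, j and consider s_{i,j}(a, b) = ((a⁰,…,a^{i-1},1,a^{i+1},…,a^{n+1}), (b⁰,…,b^{j-1},1,b^{j+1},…,b^{n+1})) restricted to the set where the pairing vanishes. The pullback s_{i,j}^* ω of the 1-form ω = Σ_{k} (x^k dy^k - y^k dx^k) is a contact form, i.e., s_{i,j}^*(ω ∧ (dω)^{∧n}) is nonvanishing, at every point of the chart where it is defined with x^i ≠ 0 and y^j ≠ 0. -/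
open Matrix

/-!
Write `V = {v | vⁱ = 0}` and `W = {w | wʲ = 0}`. On the tangent space
`T = {(v, w) ∈ V × W | b·v + a·w = 0}` of the chart the form `ω` is `a·w - b·v`, so
`T ∩ ker ω = (V ∩ b^⊥) × (W ∩ a^⊥)` and `dω` on it is twice the pairing `v·w'` of the two
factors. That pairing is nondegenerate: a `v` orthogonal to `W ∩ a^⊥ = {eⱼ, a}^⊥` lies in
`span {eⱼ, a}`, say `v = c eⱼ + d a`, and then `b·v = c` and `vⁱ = d` force `v = 0`. Finally
`ω ≠ 0` on `T` because `a·b = 0` gives `b` a nonzero entry off `i` and `a` one off `j`.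
-/

theorem Matrix.mem_span_of_forall_dotProduct_eq_zero {K m ι : Type*} [Field K] [Fintype m]
    [DecidableEq m] [Finite ι] {u : ι → m → K} {v : m → K}
    (h : ∀ w, (∀ k, u k ⬝ᵥ w = 0) → v ⬝ᵥ w = 0) :
    v ∈ Submodule.span K (Set.range u) := by
  let e := dotProductEquiv K m
  rw [← Submodule.apply_mem_span_image_iff_mem_span (f := e.toLinearMap) e.injective,
    ← Set.range_comp]
  exact mem_span_of_iInf_ker_le_ker fun w hw ↦ h w fun k ↦ by
    simpa [e] using (Submodule.mem_iInf _).1 hw k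

theorem Matrix.exists_ne_apply_ne_zero_of_dotProduct_eq_zero {R m : Type*} [Semiring R]
    [Fintype m] [DecidableEq m] {i : m} {a b : m → R} (hai : a i = 1) (hab : a ⬝ᵥ b = 0)
    (hb : b ≠ 0) : ∃ k ≠ i, b k ≠ 0 := by
  by_contra! hoff
  have hb_single : b = Pi.single i (b i) := by
    ext k
    rcases eq_or_ne k i with rfl | hki
    · simp
    · simp [hoff k hki, hki]
  rw [hb_single, dotProduct_single, hai, one_mul] at hab
  exact hb (by rw [hb_single, hab, Pi.single_zero])

theorem Matrix.exists_dotProduct_ne_zero_of_apply_eq_zero {K m : Type*} [Field K] [Fintype m]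
    [DecidableEq m] {i j : m} {a b v : m → K} (hai : a i = 1) (hbj : b j = 1)
    (hab : a ⬝ᵥ b = 0) (hvi : v i = 0) (hbv : b ⬝ᵥ v = 0) (hv : v ≠ 0) :
    ∃ w, w j = 0 ∧ a ⬝ᵥ w = 0 ∧ v ⬝ᵥ w ≠ 0 := by
  by_contra! horth
  have hspan : v ∈ Submodule.span K {Pi.single j 1, a} := by
    rw [← range_cons_cons_empty _ _ ![]]
    refine mem_span_of_forall_dotProduct_eq_zero fun w hw ↦ horth w ?_ (hw 1)
    simpa [single_dotProduct] using hw 0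
  obtain ⟨c, d, rfl⟩ := Submodule.mem_span_pair.1 hspan
  have hc : c = 0 := by
    simpa [dotProduct_single, dotProduct_comm b a, hab, hbj] using hbv
  subst hc
  have hd : d = 0 := by simpa [hai] using hvi
  exact hv (by simp [hd])

theorem Matrix.exists_dotProduct_add_eq_zero_and_sub_ne_zero {K m : Type*} [Field K]
    [CharZero K] [Fintype m] [DecidableEq m] {i j : m} {a b : m → K} (hai : a i = 1) (hbj : b j = 1)
    (hab : a ⬝ᵥ b = 0) :
    ∃ v w : m → K, v i = 0 ∧ w j = 0 ∧ v ⬝ᵥ b + a ⬝ᵥ w = 0 ∧ a ⬝ᵥ w - b ⬝ᵥ v ≠ 0 := by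
  obtain ⟨k, hki, hbk⟩ := exists_ne_apply_ne_zero_of_dotProduct_eq_zero hai hab
    (ne_of_apply_ne (· j) (by simp [hbj]))
  obtain ⟨l, hlj, hal⟩ := exists_ne_apply_ne_zero_of_dotProduct_eq_zero hbj
    (by rwa [dotProduct_comm]) (ne_of_apply_ne (· i) (by simp [hai]))
  refine ⟨a l • Pi.single k 1, -(b k • Pi.single l 1), ?_, ?_, ?_, ?_⟩
  · simp [hki.symm]
  · simp [hlj.symm]
  · simp [dotProduct_single, smul_dotProduct, mul_comm]
  · have : -(b k * a l) - a l * b k = -2 * (a l * b k) := by ring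
    simpa [dotProduct_single, this] using ⟨hal, hbk⟩

/-- On the affine chart {xⁱ = 1, yʲ = 1} of the incidence variety C̃ = {x·y = 0}, the
    pullback s_{i,j}^* ω of ω = Σ(xᵏ dyᵏ - yᵏ dxᵏ) is a contact form at every point:
    equivalently (to the nonvanishing of s_{i,j}^*(ω ∧ (dω)^n)), on the tangent space
    T of the chart, ω is a nonzero linear functional and dω = 2Σ dxᵏ∧dyᵏ is
    nondegenerate on T ∩ ker ω. -/
theorem stmt18 (n : ℕ) (i j : Fin (n+2))
    (a b : Fin (n+2) → ℝ) (hai : a i = 1) (hbj : b j = 1) (hab : a ⬝ᵥ b = 0)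
    (T : Set ((Fin (n+2) → ℝ) × (Fin (n+2) → ℝ)))
    (hT : T = {vw | vw.1 i = 0 ∧ vw.2 j = 0 ∧ vw.1 ⬝ᵥ b + a ⬝ᵥ vw.2 = 0})
    (α : (Fin (n+2) → ℝ) × (Fin (n+2) → ℝ) → ℝ)
    (hα : α = fun vw => a ⬝ᵥ vw.2 - b ⬝ᵥ vw.1)
    (β : (Fin (n+2) → ℝ) × (Fin (n+2) → ℝ) → (Fin (n+2) → ℝ) × (Fin (n+2) → ℝ) → ℝ)
    (hβ : β = fun vw vw' => 2 * (vw.1 ⬝ᵥ vw'.2 - vw'.1 ⬝ᵥ vw.2)) :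
    (∃ vw ∈ T, α vw ≠ 0) ∧
    (∀ vw ∈ T, α vw = 0 → vw ≠ 0 → ∃ vw' ∈ T, α vw' = 0 ∧ β vw vw' ≠ 0) := by
  subst hT hα hβ
  have hba : b ⬝ᵥ a = 0 := by rwa [dotProduct_comm]
  refine ⟨?_, ?_⟩
  · obtain ⟨v, w, hvi, hwj, htan, hα⟩ :=
      exists_dotProduct_add_eq_zero_and_sub_ne_zero hai hbj hab
    exact ⟨(v, w), ⟨hvi, hwj, htan⟩, hα⟩
  · rintro ⟨v, w⟩ ⟨hvi, hwj, htan⟩ hker hne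
    dsimp only at hvi hwj htan hker ⊢
    have hbv : b ⬝ᵥ v = 0 := by linarith [dotProduct_comm v b]
    have haw : a ⬝ᵥ w = 0 := by linarith [dotProduct_comm v b]
    by_cases hv : v = 0
    · have hw : w ≠ 0 := fun hw ↦ hne (by rw [hv, hw, Prod.mk_zero_zero])
      obtain ⟨v', hv'i, hbv', hwv'⟩ :=
        exists_dotProduct_ne_zero_of_apply_eq_zero hbj hai hba hwj haw hw
      refine ⟨(v', 0), ⟨hv'i, rfl, ?_⟩, ?_, ?_⟩
      · simp [dotProduct_comm v' b, hbv']
      · simp [hbv']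
      · simpa [dotProduct_comm v' w] using hwv'
    · obtain ⟨w', hw'j, haw', hvw'⟩ :=
        exists_dotProduct_ne_zero_of_apply_eq_zero hai hbj hab hvi hbv hv
      refine ⟨(0, w'), ⟨rfl, hw'j, by simp [haw']⟩, by simp [haw'], by simpa using hvw'⟩
end
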